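/- arXiv:1212.3236 — 5 statements merged into one kernel-verified Lean document; each statement's English description precedes it below -/
import Mathlib

section
/- Let X be a real Hilbert space and E, C : X → ℝ with E nonnegative and with both E and C satisfying the splitting property. Let u ∈ X with C(u) ≠ 0, and let (w_n) be a sequence converging weakly to 0 such that E(w_n) → e and C(w_n) → c for some real numbers e, c with c ≠ 0 and C(u) + c ≠ 0. Then the sequence Λ(u + w_n) = E(u + w_n)/|C(u + w_n)| converges, and its limit satisfies lim_n Λ(u + w_n) ≥ min( E(u)/|C(u)| , e/|c| ). -/
/-!
By the splitting property, `E (u + w n) → E u + e` and `C (u + w n) → C u + c`, so the ratio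
converges to `(E u + e) / |C u + c|`. The lower bound is a mediant inequality: with `m` the
minimum of the two ratios, `m |C u + c| ≤ m |C u| + m |c| ≤ E u + e`.
-/

open Filter Topology

variable {X : Type*} [NormedAddCommGroup X] [InnerProductSpace ℝ X]

/-- A sequence in a real inner product space converges weakly to `0`. -/
def WeakNullSeq (w : ℕ → X) : Prop :=
  ∀ v : X, Tendsto (fun n => (inner ℝ v (w n) : ℝ)) atTop (𝓝 0)

/-- A functional `F : X → ℝ` has the splitting property. -/
def SplittingProperty (F : X → ℝ) : Prop :=
  ∀ (u : X) (w : ℕ → X), WeakNullSeq w →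
    Tendsto (fun n => F (u + w n) - F u - F (w n)) atTop (𝓝 0)

/-- The hylenic ratio `Λ(u) = E(u)/|C(u)|`. -/
noncomputable def hylenicRatio (E C : X → ℝ) (u : X) : ℝ := E u / |C u|

theorem SplittingProperty.tendsto_add {F : X → ℝ} (hF : SplittingProperty F) (u : X)
    {w : ℕ → X} (hw : WeakNullSeq w) {a : ℝ} (ha : Tendsto (fun n => F (w n)) atTop (𝓝 a)) :
    Tendsto (fun n => F (u + w n)) atTop (𝓝 (F u + a)) := by
  simpa using ((hF u w hw).add ha).const_add (F u)

theorem mul_abs_le_of_le_div_abs {m a x : ℝ} (hm : m ≤ a / |x|) (ha : 0 ≤ a) : m * |x| ≤ a := by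
  rcases eq_or_ne x 0 with rfl | hx
  · simpa using ha
  · exact (le_div_iff₀ (abs_pos.2 hx)).1 hm

theorem min_div_abs_le_add_div_abs_add {a b x y : ℝ} (ha : 0 ≤ a) (hb : 0 ≤ b)
    (hxy : x + y ≠ 0) : min (a / |x|) (b / |y|) ≤ (a + b) / |x + y| := by
  set m := min (a / |x|) (b / |y|)
  have hm : 0 ≤ m := le_min (by positivity) (by positivity)
  rw [le_div_iff₀ (abs_pos.2 hxy)]
  calc m * |x + y| ≤ m * (|x| + |y|) := mul_le_mul_of_nonneg_left (abs_add_le x y) hm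
    _ = m * |x| + m * |y| := mul_add m |x| |y|
    _ ≤ a + b := add_le_add (mul_abs_le_of_le_div_abs (min_le_left _ _) ha)
        (mul_abs_le_of_le_div_abs (min_le_right _ _) hb)

theorem stmt_2_general (E C : X → ℝ) (hE : ∀ u : X, 0 ≤ E u)
    (hEs : SplittingProperty E) (hCs : SplittingProperty C)
    (u : X) (w : ℕ → X) (hw : WeakNullSeq w)
    (e c : ℝ)
    (he : Tendsto (fun n => E (w n)) atTop (𝓝 e))
    (hc : Tendsto (fun n => C (w n)) atTop (𝓝 c))
    (hsum : C u + c ≠ 0) :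
    ∃ l : ℝ, Tendsto (fun n => hylenicRatio E C (u + w n)) atTop (𝓝 l) ∧
      min (hylenicRatio E C u) (e / |c|) ≤ l :=
  ⟨(E u + e) / |C u + c|,
    (hEs.tendsto_add u hw he).div (hCs.tendsto_add u hw hc).abs (abs_ne_zero.2 hsum),
    min_div_abs_le_add_div_abs_add (hE u) (ge_of_tendsto' he fun n => hE (w n)) hsum⟩

/-- If `E ≥ 0` and `E, C` satisfy the splitting property, `C u ≠ 0`, and
`w n ⇀ 0` weakly with `E (w n) → e`, `C (w n) → c`, `c ≠ 0`, `C u + c ≠ 0`,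
then `Λ(u + w n)` converges and its limit is at least `min (Λ u) (e/|c|)`. -/
theorem stmt_2 [CompleteSpace X] (E C : X → ℝ) (hE : ∀ u : X, 0 ≤ E u)
    (hEs : SplittingProperty E) (hCs : SplittingProperty C)
    (u : X) (hCu : C u ≠ 0) (w : ℕ → X) (hw : WeakNullSeq w)
    (e c : ℝ)
    (he : Tendsto (fun n => E (w n)) atTop (𝓝 e))
    (hc : Tendsto (fun n => C (w n)) atTop (𝓝 c))
    (hc0 : c ≠ 0) (hsum : C u + c ≠ 0) :
    ∃ l : ℝ, Tendsto (fun n => hylenicRatio E C (u + w n)) atTop (𝓝 l) ∧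
      min (hylenicRatio E C u) (e / |c|) ≤ l :=
  stmt_2_general E C hE hEs hCs u w hw e c he hc hsum
end

section
/- Let X be a real Hilbert space and G a group of linear isometric bijections of X. Let E, C : X → ℝ be continuous, G-invariant functionals with E(0) = C(0) = 0, both satisfying the splitting property, and with E coercive: E(u) > 0 for every u ≠ 0, E(u_n) → ∞ whenever ‖u_n‖ → ∞, and ‖u_n‖ → 0 whenever E(u_n) → 0. Assume the hylomorphy condition inf{Λ(u) : u ∈ X, C(u) ≠ 0} < Λ₀. Then for every δ ∈ (0, δ_∞): every minimizing sequence of J_δ (over {u : C(u) ≠ 0}) is G-compact, and J_δ attains its infimum at some u_δ with u_δ ≠ 0 and C(u_δ) ≠ 0. -/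
open Filter Topology

variable {X : Type*} [NormedAddCommGroup X] [InnerProductSpace ℝ X]

/-- A sequence `(u n)` is `G`-vanishing: it is norm-bounded and for every
subsequence `(u (φ k))` and every sequence `(g k)` in `G`, `g k (u (φ k))`
converges weakly to `0`. -/
def GVanishing (G : Subgroup (X ≃ₗᵢ[ℝ] X)) (u : ℕ → X) : Prop :=
  (∃ M : ℝ, ∀ n, ‖u n‖ ≤ M) ∧
  ∀ φ : ℕ → ℕ, StrictMono φ → ∀ g : ℕ → G,
    WeakNullSeq (fun k => (g k : X ≃ₗᵢ[ℝ] X) (u (φ k)))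

/-- `Λ₀`: the infimum of `liminf Λ(u n)` over all `G`-vanishing sequences
with `C (u n) ≠ 0` for all `n`. -/
noncomputable def Lambda0 (G : Subgroup (X ≃ₗᵢ[ℝ] X)) (E C : X → ℝ) : ℝ :=
  sInf {l : ℝ | ∃ u : ℕ → X, GVanishing G u ∧ (∀ n, C (u n) ≠ 0) ∧
    l = liminf (fun n => hylenicRatio E C (u n)) atTop}

/-- `J_δ(u) = Λ(u) + δ E(u)`. -/
noncomputable def Jfun (E C : X → ℝ) (δ : ℝ) (u : X) : ℝ :=
  hylenicRatio E C u + δ * E u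

/-- A sequence is `G`-compact: some subsequence, translated by elements of `G`,
is norm-convergent. -/
def GCompactSeq (G : Subgroup (X ≃ₗᵢ[ℝ] X)) (u : ℕ → X) : Prop :=
  ∃ φ : ℕ → ℕ, StrictMono φ ∧ ∃ g : ℕ → G, ∃ L : X,
    Tendsto (fun k => (g k : X ≃ₗᵢ[ℝ] X) (u (φ k))) atTop (𝓝 L)

/-- `δ` lies in the interval `(0, δ_∞)`, where
`δ_∞ = sup {δ > 0 | ∃ v, C v ≠ 0 ∧ J_δ(v) < Λ₀}`; equivalently (since `E ≥ 0`
makes the set below an interval) there is `δ' > δ` in that set. -/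
def MemDeltaInterval (G : Subgroup (X ≃ₗᵢ[ℝ] X)) (E C : X → ℝ) (δ : ℝ) : Prop :=
  0 < δ ∧ ∃ δ' : ℝ, δ < δ' ∧ ∃ v : X, C v ≠ 0 ∧ Jfun E C δ' v < Lambda0 G E C

/-- The hylomorphy condition `inf {Λ(u) | C u ≠ 0} < Λ₀`. -/
def HylomorphyCondition (G : Subgroup (X ≃ₗᵢ[ℝ] X)) (E C : X → ℝ) : Prop :=
  sInf {r : ℝ | ∃ u : X, C u ≠ 0 ∧ r = hylenicRatio E C u} < Lambda0 G E C

/-!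
Let `m` be the infimum of `J_δ`; the choice of `δ` gives `m < Λ₀`. A minimizing sequence is
bounded by coercivity of `E`, and it is not `G`-vanishing, since otherwise
`Λ₀ ≤ liminf Λ ≤ liminf J_δ = m`. So, after translating by `G` and passing to a subsequence, it
converges weakly to some `w ≠ 0`. Splitting `E` and `C` at `w`, with `α = E w`,
`β = lim E (u n - w)` and `γ = lim C (u n - w)`, minimality gives `(m - δα)|C w| ≤ α` and
`(m - δβ)|γ| ≤ β`, while the sequence itself gives `(m - δ(α + β))|C w + γ| = α + β`.
As `|C w + γ| ≤ |C w| + |γ|`, this forces `β = γ = 0`: `E (u n - w) → 0` yields norm convergence,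
and `w` is a minimizer.
-/

theorem Real.liminf_nonneg {ι : Type*} {l : Filter ι} {f : ι → ℝ} (hf : ∀ᶠ i in l, 0 ≤ f i) :
    0 ≤ liminf f l := by
  by_cases h : BddAbove {a : ℝ | ∀ᶠ i in l, a ≤ f i}
  · exact le_csSup h hf
  · rw [liminf_eq, Real.sSup_of_not_bddAbove h]

theorem exists_subseq_tendsto_of_mul_abs_le {a b c : ℕ → ℝ} {A B : ℝ}
    (ha : Tendsto a atTop (𝓝 A)) (hA : 0 < A) (hb : Tendsto b atTop (𝓝 B))
    (hc : ∀ n, a n * |c n| ≤ b n) :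
    ∃ φ : ℕ → ℕ, StrictMono φ ∧ ∃ γ : ℝ, Tendsto (c ∘ φ) atTop (𝓝 γ) := by
  have hbound : ∀ᶠ n in atTop, c n ∈ Set.Icc (-(2 * (B + 1) / A)) (2 * (B + 1) / A) := by
    filter_upwards [ha.eventually (eventually_ge_nhds (half_lt_self hA)),
      hb.eventually (eventually_le_nhds (lt_add_one B))] with n han hbn
    rw [Set.mem_Icc, ← abs_le, le_div_iff₀ hA]
    nlinarith [hc n, abs_nonneg (c n)]
  obtain ⟨γ, -, φ, hφ, hγ⟩ := tendsto_subseq_of_frequently_bounded (Metric.isBounded_Icc _ _)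
    hbound.frequently
  exact ⟨φ, hφ, γ, hγ⟩

/-- With `J(e, c) = e/|c| + δ e` and denominators cleared: if `J ≥ m` at `(α, p)` and `(β, q)`
but `J = m` at `(α + β, p + q)`, then the splitting is trivial. -/
theorem hylenic_no_dichotomy {δ m α β p q : ℝ} (hδ : 0 < δ) (hα : 0 < α) (hβ : 0 ≤ β)
    (hp : (m - δ * α) * |p| ≤ α) (hq : (m - δ * β) * |q| ≤ β)
    (hpq : (m - δ * (α + β)) * |p + q| = α + β) : β = 0 ∧ q = 0 := by
  set μ := m - δ * (α + β)
  have htri : |p + q| ≤ |p| + |q| := abs_add_le p q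
  have hμ : 0 < μ := by
    by_contra! h
    nlinarith [abs_nonneg (p + q)]
  have hsplit : β * |p| + α * |q| ≤ 0 := by
    have : δ * (β * |p| + α * |q|) ≤ 0 := by nlinarith
    exact nonpos_of_mul_nonpos_right this hδ
  have hq0 : |q| = 0 := le_antisymm (nonpos_of_mul_nonpos_right
    (by nlinarith [mul_nonneg hβ (abs_nonneg p)]) hα) (abs_nonneg q)
  have hp0 : 0 < |p| := by
    rw [abs_eq_zero.mp hq0, add_zero] at hpq
    by_contra! h
    nlinarith [abs_nonneg p]
  exact ⟨le_antisymm (nonpos_of_mul_nonpos_left (by simpa [hq0] using hsplit) hp0) hβ,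
    abs_eq_zero.mp hq0⟩

theorem exists_norm_le_of_coercive {V : Type*} [Norm V] {E : V → ℝ}
    (hEcoer : ∀ u : ℕ → V, Tendsto (fun n => ‖u n‖) atTop atTop →
      Tendsto (fun n => E (u n)) atTop atTop)
    {u : ℕ → V} {K : ℝ} (hK : ∀ n, E (u n) ≤ K) : ∃ M : ℝ, ∀ n, ‖u n‖ ≤ M := by
  by_contra! h
  choose n hn using fun k : ℕ => h k
  have hnorm : Tendsto (fun k => ‖u (n k)‖) atTop atTop :=
    tendsto_atTop_mono (fun k => (hn k).le) tendsto_natCast_atTop_atTop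
  obtain ⟨k, hk⟩ := ((hEcoer _ hnorm).eventually_gt_atTop K).exists
  exact hk.not_ge (hK _)

theorem WeakNullSeq.comp_tendsto {w : ℕ → X} (hw : WeakNullSeq w) {σ : ℕ → ℕ}
    (hσ : Tendsto σ atTop atTop) : WeakNullSeq (w ∘ σ) :=
  fun v => (hw v).comp hσ

open InnerProductSpace in
theorem exists_strictMono_weakNullSeq_sub [CompleteSpace X] {u : ℕ → X} {M : ℝ}
    (hu : ∀ n, ‖u n‖ ≤ M) :
    ∃ ψ : ℕ → ℕ, StrictMono ψ ∧ ∃ L : X, WeakNullSeq (fun k => u (ψ k) - L) := by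
  -- Sequential Banach–Alaoglu needs separability, so work in the closed span `Y` of the sequence.
  set Y : Submodule ℝ X := (Submodule.span ℝ (Set.range u)).topologicalClosure
  have huY : ∀ n, u n ∈ Y := fun n =>
    Submodule.le_topologicalClosure _ (Submodule.subset_span ⟨n, rfl⟩)
  have hYsep : TopologicalSpace.IsSeparable (Y : Set X) := by
    simpa [Y, Submodule.topologicalClosure_coe] using
      ((Set.countable_range u).isSeparable.span (R := ℝ)).closure
  have := hYsep.separableSpace
  have : CompleteSpace Y := (Submodule.isClosed_topologicalClosure _).completeSpace_coe
  let f : ℕ → WeakDual ℝ Y := fun n => toDual ℝ Y ⟨u n, huY n⟩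
  have hf : ∀ n, f n ∈ WeakDual.toStrongDual ⁻¹' Metric.closedBall 0 M := fun n => by
    simp only [Set.mem_preimage, Metric.mem_closedBall]
    refine (dist_zero_right (toDual ℝ Y ⟨u n, huY n⟩)).trans_le ?_
    exact ((toDual ℝ Y).norm_map _).trans_le (hu n)
  obtain ⟨ℓ, -, ψ, hψ, hℓ⟩ := WeakDual.isSeqCompact_closedBall ℝ Y 0 M hf
  refine ⟨ψ, hψ, (toDual ℝ Y).symm ℓ, fun v => ?_⟩
  -- On `Y`, where the sequence lives, `v` acts as its orthogonal projection `P` does.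
  set P := Y.orthogonalProjectionOnto v
  have hP : ∀ y ∈ Y, inner ℝ v y = inner ℝ (P : X) y := fun y hy => by
    rw [← sub_eq_zero, ← inner_sub_left]
    exact Y.starProjection_inner_eq_zero v y hy
  have hvL : inner ℝ v ((toDual ℝ Y).symm ℓ : X) = ℓ P := by
    rw [hP _ (Subtype.mem _), real_inner_comm, ← Submodule.coe_inner]
    exact toDual_symm_apply
  have hvu : ∀ k, inner ℝ v (u (ψ k)) = f (ψ k) P := fun k => by
    rw [hP _ (huY _), real_inner_comm]
    rfl
  have := ((WeakDual.eval_continuous P).tendsto ℓ).comp hℓ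
  simpa [inner_sub_right, hvL, hvu] using this.sub_const (ℓ P)

theorem SplittingProperty.tendsto_sub {F : X → ℝ} (hF : SplittingProperty F) {u : ℕ → X} {L : X}
    (hu : WeakNullSeq (fun n => u n - L)) :
    Tendsto (fun n => F (u n) - F (u n - L)) atTop (𝓝 (F L)) := by
  have := (hF L _ hu).add_const (F L)
  rw [zero_add] at this
  refine this.congr fun n => ?_
  rw [add_sub_cancel]
  ring

section Functionals

variable {V : Type*} {E C : V → ℝ} {δ m : ℝ}

theorem hylenicRatio_nonneg (hEnn : ∀ v, 0 ≤ E v) (v : V) : 0 ≤ hylenicRatio E C v :=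
  div_nonneg (hEnn v) (abs_nonneg _)

theorem mul_le_Jfun (hEnn : ∀ v, 0 ≤ E v) (v : V) : δ * E v ≤ Jfun E C δ v :=
  le_add_of_nonneg_left (hylenicRatio_nonneg hEnn v)

theorem hylenicRatio_le_Jfun (hδ : 0 ≤ δ) (hEnn : ∀ v, 0 ≤ E v) (v : V) :
    hylenicRatio E C v ≤ Jfun E C δ v :=
  le_add_of_nonneg_right (mul_nonneg hδ (hEnn v))

/-- `m ≤ J_δ v` with the denominator cleared; in this form it also holds where `C v = 0`. -/
theorem sub_mul_abs_le_of_le_Jfun (hEnn : ∀ v, 0 ≤ E v)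
    (hm : ∀ v, C v ≠ 0 → m ≤ Jfun E C δ v) (v : V) : (m - δ * E v) * |C v| ≤ E v := by
  by_cases hC : C v = 0
  · simp [hC, hEnn v]
  · have := hm v hC
    rw [Jfun, hylenicRatio] at this
    exact (le_div_iff₀ (abs_pos.mpr hC)).mp (by linarith)

theorem exists_energy_le_of_tendsto_Jfun (hδ : 0 < δ) (hEnn : ∀ v, 0 ≤ E v) {u : ℕ → V}
    (hJu : Tendsto (fun n => Jfun E C δ (u n)) atTop (𝓝 m)) : ∃ K : ℝ, ∀ n, E (u n) ≤ K := by
  obtain ⟨B, hB⟩ := hJu.bddAbove_range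
  refine ⟨B / δ, fun n => (le_div_iff₀' hδ).mpr ?_⟩
  exact (mul_le_Jfun hEnn _).trans (hB ⟨n, rfl⟩)

end Functionals

theorem Lambda0_le_of_gVanishing {E C : X → ℝ} {δ m : ℝ} {G : Subgroup (X ≃ₗᵢ[ℝ] X)}
    (hδ : 0 ≤ δ) (hEnn : ∀ v, 0 ≤ E v)
    {u : ℕ → X} (hu : GVanishing G u) (hCu : ∀ n, C (u n) ≠ 0)
    (hJu : Tendsto (fun n => Jfun E C δ (u n)) atTop (𝓝 m)) : Lambda0 G E C ≤ m := by
  have hbdd : BddBelow {l : ℝ | ∃ w : ℕ → X, GVanishing G w ∧ (∀ n, C (w n) ≠ 0) ∧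
      l = liminf (fun n => hylenicRatio E C (w n)) atTop} := by
    refine ⟨0, ?_⟩
    rintro _ ⟨w, -, -, rfl⟩
    exact Real.liminf_nonneg (Eventually.of_forall fun n => hylenicRatio_nonneg hEnn _)
  calc Lambda0 G E C ≤ liminf (fun n => hylenicRatio E C (u n)) atTop :=
        csInf_le hbdd ⟨u, hu, hCu, rfl⟩
    _ ≤ liminf (fun n => Jfun E C δ (u n)) atTop :=
        liminf_le_liminf (Eventually.of_forall fun n => hylenicRatio_le_Jfun hδ hEnn _)
          (isBoundedUnder_of ⟨0, fun n => hylenicRatio_nonneg hEnn _⟩)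
          hJu.isBoundedUnder_le.isCoboundedUnder_ge
    _ = m := hJu.liminf_eq

theorem exists_translate_weakNullSeq_sub_ne_zero [CompleteSpace X] {G : Subgroup (X ≃ₗᵢ[ℝ] X)}
    {u : ℕ → X} {M : ℝ} (hM : ∀ n, ‖u n‖ ≤ M) (hu : ¬ GVanishing G u) :
    ∃ φ : ℕ → ℕ, StrictMono φ ∧ ∃ g : ℕ → G, ∃ w : X, w ≠ 0 ∧
      WeakNullSeq (fun k => (g k : X ≃ₗᵢ[ℝ] X) (u (φ k)) - w) := by
  simp only [GVanishing, WeakNullSeq, not_and, not_forall] at hu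
  obtain ⟨φ, hφ, g, v, hv⟩ := hu ⟨M, hM⟩
  obtain ⟨s, hs, hfreq⟩ := not_tendsto_iff_exists_frequently_notMem.mp hv
  obtain ⟨ψ, hψ, hψs⟩ := extraction_of_frequently_atTop hfreq
  obtain ⟨χ, hχ, w, hw⟩ := exists_strictMono_weakNullSeq_sub
    (u := fun k => (g (ψ k) : X ≃ₗᵢ[ℝ] X) (u (φ (ψ k)))) (M := M) fun k => by simpa using hM _
  refine ⟨φ ∘ ψ ∘ χ, hφ.comp (hψ.comp hχ), g ∘ ψ ∘ χ, w, ?_, hw⟩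
  rintro rfl
  obtain ⟨k, hk⟩ := ((hw v).eventually_mem hs).exists
  exact hψs (χ k) (by simpa using hk)

section Minimization

variable {E C : X → ℝ} {δ m : ℝ}

theorem exists_subseq_tendsto_remainder (hδ : 0 < δ) (hEs : SplittingProperty E)
    (hEnn : ∀ v, 0 ≤ E v) (hm : ∀ v, C v ≠ 0 → m ≤ Jfun E C δ v) {u : ℕ → X}
    (hJu : Tendsto (fun n => Jfun E C δ (u n)) atTop (𝓝 m))
    {w : X} (hw : 0 < E w) (huw : WeakNullSeq (fun n => u n - w)) :
    ∃ σ : ℕ → ℕ, StrictMono σ ∧ ∃ β γ : ℝ, Tendsto (fun k => E (u (σ k) - w)) atTop (𝓝 β) ∧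
      Tendsto (fun k => C (u (σ k) - w)) atTop (𝓝 γ) := by
  obtain ⟨K, hK⟩ := exists_energy_le_of_tendsto_Jfun hδ hEnn hJu
  obtain ⟨e, -, σ, hσ, he⟩ :=
    tendsto_subseq_of_bounded (Metric.isBounded_Icc 0 K) fun n => ⟨hEnn (u n), hK n⟩
  have hβ : Tendsto (fun k => E (u (σ k) - w)) atTop (𝓝 (e - E w)) :=
    (he.sub (hEs.tendsto_sub (huw.comp_tendsto hσ.tendsto_atTop))).congr fun k =>
      sub_sub_cancel _ _
  have hΛ : 0 ≤ m - δ * e :=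
    ge_of_tendsto' ((hJu.comp hσ.tendsto_atTop).sub (he.const_mul δ)) fun k => by
      simpa [Jfun] using hylenicRatio_nonneg hEnn (u (σ k))
  -- `m - δ E(u - w) → m - δ e + δ E w > 0` keeps `|C (u - w)|` bounded.
  obtain ⟨τ, hτ, γ, hγ⟩ := exists_subseq_tendsto_of_mul_abs_le
    (tendsto_const_nhds.sub (hβ.const_mul δ)) (by nlinarith [mul_pos hδ hw]) hβ
    fun k => sub_mul_abs_le_of_le_Jfun hEnn hm (u (σ k) - w)
  exact ⟨σ ∘ τ, hσ.comp hτ, e - E w, γ, hβ.comp hτ.tendsto_atTop, hγ⟩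

theorem tendsto_of_tendsto_remainder (hδ : 0 < δ) (hEs : SplittingProperty E)
    (hCs : SplittingProperty C) (hEnn : ∀ v, 0 ≤ E v)
    (hEzero : ∀ u : ℕ → X, Tendsto (fun n => E (u n)) atTop (𝓝 0) →
      Tendsto (fun n => ‖u n‖) atTop (𝓝 0))
    (hm : ∀ v, C v ≠ 0 → m ≤ Jfun E C δ v) {u : ℕ → X} (hCu : ∀ n, C (u n) ≠ 0)
    (hJu : Tendsto (fun n => Jfun E C δ (u n)) atTop (𝓝 m))
    {w : X} (hw : 0 < E w) (huw : WeakNullSeq (fun n => u n - w)) {β γ : ℝ}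
    (hβ : Tendsto (fun n => E (u n - w)) atTop (𝓝 β))
    (hγ : Tendsto (fun n => C (u n - w)) atTop (𝓝 γ)) :
    Tendsto u atTop (𝓝 w) ∧ C w ≠ 0 ∧ Jfun E C δ w = m := by
  have hE : Tendsto (fun n => E (u n)) atTop (𝓝 (E w + β)) :=
    ((hEs.tendsto_sub huw).add hβ).congr fun n => by ring
  have hC : Tendsto (fun n => C (u n)) atTop (𝓝 (C w + γ)) :=
    ((hCs.tendsto_sub huw).add hγ).congr fun n => by ring
  have hΛ : Tendsto (fun n => hylenicRatio E C (u n)) atTop (𝓝 (m - δ * (E w + β))) :=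
    (hJu.sub (hE.const_mul δ)).congr fun n => by rw [Jfun]; ring
  have hwhole : (m - δ * (E w + β)) * |C w + γ| = E w + β :=
    tendsto_nhds_unique ((hΛ.mul hC.abs).congr fun n =>
      div_mul_cancel₀ _ (abs_ne_zero.mpr (hCu n))) hE
  have hrem : (m - δ * β) * |γ| ≤ β :=
    le_of_tendsto_of_tendsto' ((tendsto_const_nhds.sub (hβ.const_mul δ)).mul hγ.abs) hβ
      fun n => sub_mul_abs_le_of_le_Jfun hEnn hm _
  obtain ⟨rfl, rfl⟩ := hylenic_no_dichotomy hδ hw (ge_of_tendsto' hβ fun n => hEnn _)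
    (sub_mul_abs_le_of_le_Jfun hEnn hm w) hrem hwhole
  rw [add_zero, add_zero] at hwhole
  have hCw : C w ≠ 0 := fun h => by
    rw [h, abs_zero, mul_zero] at hwhole
    exact hw.ne hwhole
  have hΛw : hylenicRatio E C w = m - δ * E w :=
    (div_eq_iff (abs_ne_zero.mpr hCw)).mpr hwhole.symm
  refine ⟨tendsto_iff_norm_sub_tendsto_zero.mpr (hEzero _ hβ), hCw, ?_⟩
  rw [Jfun, hΛw]
  ring

theorem exists_translate_subseq_tendsto_minimizer [CompleteSpace X]
    {G : Subgroup (X ≃ₗᵢ[ℝ] X)} (hδ : 0 < δ)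
    (hEG : ∀ g : G, ∀ u : X, E ((g : X ≃ₗᵢ[ℝ] X) u) = E u)
    (hCG : ∀ g : G, ∀ u : X, C ((g : X ≃ₗᵢ[ℝ] X) u) = C u)
    (hEs : SplittingProperty E) (hCs : SplittingProperty C)
    (hEnn : ∀ v, 0 ≤ E v) (hEpos : ∀ u : X, u ≠ 0 → 0 < E u)
    (hEcoer : ∀ u : ℕ → X, Tendsto (fun n => ‖u n‖) atTop atTop →
      Tendsto (fun n => E (u n)) atTop atTop)
    (hEzero : ∀ u : ℕ → X, Tendsto (fun n => E (u n)) atTop (𝓝 0) →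
      Tendsto (fun n => ‖u n‖) atTop (𝓝 0))
    (hm : ∀ v, C v ≠ 0 → m ≤ Jfun E C δ v) (hmΛ : m < Lambda0 G E C)
    {u : ℕ → X} (hCu : ∀ n, C (u n) ≠ 0)
    (hJu : Tendsto (fun n => Jfun E C δ (u n)) atTop (𝓝 m)) :
    ∃ φ : ℕ → ℕ, StrictMono φ ∧ ∃ g : ℕ → G, ∃ w : X,
      Tendsto (fun k => (g k : X ≃ₗᵢ[ℝ] X) (u (φ k))) atTop (𝓝 w) ∧
        C w ≠ 0 ∧ Jfun E C δ w = m := by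
  obtain ⟨K, hK⟩ := exists_energy_le_of_tendsto_Jfun hδ hEnn hJu
  obtain ⟨M, hM⟩ := exists_norm_le_of_coercive hEcoer hK
  have hnv : ¬ GVanishing G u := fun hu =>
    (Lambda0_le_of_gVanishing hδ.le hEnn hu hCu hJu).not_gt hmΛ
  obtain ⟨φ, hφ, g, w, hw0, hw⟩ := exists_translate_weakNullSeq_sub_ne_zero hM hnv
  set y := fun k => (g k : X ≃ₗᵢ[ℝ] X) (u (φ k))
  have hCy : ∀ k, C (y k) ≠ 0 := fun k => (hCG _ _).trans_ne (hCu _)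
  have hJy : Tendsto (fun k => Jfun E C δ (y k)) atTop (𝓝 m) := by
    simpa only [y, Jfun, hylenicRatio, hEG, hCG, Function.comp_def] using
      hJu.comp hφ.tendsto_atTop
  obtain ⟨σ, hσ, β, γ, hβ, hγ⟩ :=
    exists_subseq_tendsto_remainder hδ hEs hEnn hm hJy (hEpos w hw0) hw
  obtain ⟨hlim, hCw, hJw⟩ := tendsto_of_tendsto_remainder hδ hEs hCs hEnn hEzero hm
    (fun k => hCy (σ k)) (hJy.comp hσ.tendsto_atTop) (hEpos w hw0)
    (hw.comp_tendsto hσ.tendsto_atTop) hβ hγ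
  exact ⟨φ ∘ σ, hφ.comp hσ, g ∘ σ, w, hlim, hCw, hJw⟩

end Minimization

theorem stmt_6_general [CompleteSpace X] (G : Subgroup (X ≃ₗᵢ[ℝ] X)) (E C : X → ℝ)
    (hEG : ∀ g : G, ∀ u : X, E ((g : X ≃ₗᵢ[ℝ] X) u) = E u)
    (hCG : ∀ g : G, ∀ u : X, C ((g : X ≃ₗᵢ[ℝ] X) u) = C u)
    (hE0 : E 0 = 0) (hC0 : C 0 = 0)
    (hEs : SplittingProperty E) (hCs : SplittingProperty C)
    (hEpos : ∀ u : X, u ≠ 0 → 0 < E u)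
    (hEcoer : ∀ u : ℕ → X, Tendsto (fun n => ‖u n‖) atTop atTop →
      Tendsto (fun n => E (u n)) atTop atTop)
    (hEzero : ∀ u : ℕ → X, Tendsto (fun n => E (u n)) atTop (𝓝 0) →
      Tendsto (fun n => ‖u n‖) atTop (𝓝 0))
    (δ : ℝ) (hδ : MemDeltaInterval G E C δ) :
    (∀ u : ℕ → X, (∀ n, C (u n) ≠ 0) →
      Tendsto (fun n => Jfun E C δ (u n)) atTop
        (𝓝 (sInf {r : ℝ | ∃ v : X, C v ≠ 0 ∧ r = Jfun E C δ v})) →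
      GCompactSeq G u) ∧
    ∃ uδ : X, uδ ≠ 0 ∧ C uδ ≠ 0 ∧
      ∀ v : X, C v ≠ 0 → Jfun E C δ uδ ≤ Jfun E C δ v := by
  obtain ⟨hδ, δ', hδδ', v₀, hCv₀, hJv₀⟩ := hδ
  have hEnn : ∀ v, 0 ≤ E v := fun v =>
    (eq_or_ne v 0).elim (fun h => h ▸ hE0.ge) fun h => (hEpos v h).le
  set S := {r : ℝ | ∃ v : X, C v ≠ 0 ∧ r = Jfun E C δ v}
  have hSbdd : BddBelow S := ⟨0, by
    rintro _ ⟨v, -, rfl⟩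
    exact (mul_nonneg hδ.le (hEnn v)).trans (mul_le_Jfun hEnn v)⟩
  have hm : ∀ v, C v ≠ 0 → sInf S ≤ Jfun E C δ v := fun v hv => csInf_le hSbdd ⟨v, hv, rfl⟩
  have hmΛ : sInf S < Lambda0 G E C := calc
    sInf S ≤ Jfun E C δ v₀ := hm v₀ hCv₀
    _ ≤ Jfun E C δ' v₀ := add_le_add_right (mul_le_mul_of_nonneg_right hδδ'.le (hEnn v₀)) _
    _ < Lambda0 G E C := hJv₀
  have key := fun u hCu hJu => exists_translate_subseq_tendsto_minimizer (u := u) hδ hEG hCG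
    hEs hCs hEnn hEpos hEcoer hEzero hm hmΛ hCu hJu
  refine ⟨fun u hCu hJu => ?_, ?_⟩
  · obtain ⟨φ, hφ, g, w, hw, -⟩ := key u hCu hJu
    exact ⟨φ, hφ, g, w, hw⟩
  · obtain ⟨r, -, hr, hrS⟩ := exists_seq_tendsto_sInf (S := S) ⟨_, v₀, hCv₀, rfl⟩ hSbdd
    choose u hCu hru using hrS
    obtain ⟨-, -, -, w, -, hCw, hJw⟩ := key u hCu (by simpa only [← hru] using hr)
    exact ⟨w, fun h => hCw (h ▸ hC0), hCw, fun v hv => hJw ▸ hm v hv⟩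

/-- Existence of minimizers (Theorem 15 / `legicomp`): under (EC-0)–(EC-3) and
the hylomorphy condition, for every `δ ∈ (0, δ_∞)` every minimizing sequence
of `J_δ` over `{u | C u ≠ 0}` is `G`-compact, and `J_δ` attains its infimum at
some `u_δ ≠ 0` with `C u_δ ≠ 0`. -/
theorem stmt_6 [CompleteSpace X] (G : Subgroup (X ≃ₗᵢ[ℝ] X)) (E C : X → ℝ)
    (hEc : Continuous E) (hCc : Continuous C)
    (hEG : ∀ g : G, ∀ u : X, E ((g : X ≃ₗᵢ[ℝ] X) u) = E u)
    (hCG : ∀ g : G, ∀ u : X, C ((g : X ≃ₗᵢ[ℝ] X) u) = C u)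
    (hE0 : E 0 = 0) (hC0 : C 0 = 0)
    (hEs : SplittingProperty E) (hCs : SplittingProperty C)
    (hEpos : ∀ u : X, u ≠ 0 → 0 < E u)
    (hEcoer : ∀ u : ℕ → X, Tendsto (fun n => ‖u n‖) atTop atTop →
      Tendsto (fun n => E (u n)) atTop atTop)
    (hEzero : ∀ u : ℕ → X, Tendsto (fun n => E (u n)) atTop (𝓝 0) →
      Tendsto (fun n => ‖u n‖) atTop (𝓝 0))
    (hhylo : HylomorphyCondition G E C)
    (δ : ℝ) (hδ : MemDeltaInterval G E C δ) :
    (∀ u : ℕ → X, (∀ n, C (u n) ≠ 0) →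
      Tendsto (fun n => Jfun E C δ (u n)) atTop
        (𝓝 (sInf {r : ℝ | ∃ v : X, C v ≠ 0 ∧ r = Jfun E C δ v})) →
      GCompactSeq G u) ∧
    ∃ uδ : X, uδ ≠ 0 ∧ C uδ ≠ 0 ∧
      ∀ v : X, C v ≠ 0 → Jfun E C δ uδ ≤ Jfun E C δ v :=
  stmt_6_general G E C hEG hCG hE0 hC0 hEs hCs hEpos hEcoer hEzero δ hδ
end

section
/- Let X be a real Hilbert space, E, C : X → ℝ, and let 0 < δ₁ < δ₂. Suppose u₁, u₂ ∈ X satisfy C(u₁) ≠ 0, C(u₂) ≠ 0, E(u₁) > 0, E(u₂) > 0, u₁ minimizes J_{δ₁} over {u : C(u) ≠ 0} and u₂ minimizes J_{δ₂} over {u : C(u) ≠ 0}. Then: (a) J_{δ₁}(u₁) < J_{δ₂}(u₂); (b) E(u₁) ≥ E(u₂); (c) Λ(u₁) ≤ Λ(u₂); (d) |C(u₁)| ≥ |C(u₂)|. -/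
/-!
Testing each minimizer against the other gives `J_{δ₁}(u₁) ≤ J_{δ₁}(u₂)` and
`J_{δ₂}(u₂) ≤ J_{δ₂}(u₁)`. Adding them, the ratios cancel and `(δ₂ - δ₁)(E u₂ - E u₁) ≤ 0`,
so the energy decreases as `δ` grows; feeding this back into the first inequality (with
`δ₁ ≥ 0`) shows that the ratio increases, and cross-multiplying `Λ(u₁) ≤ Λ(u₂)` against
`E u₂ ≤ E u₁` shows that `|C|` decreases.
-/

open Filter Topology

variable {X : Type*} [NormedAddCommGroup X] [InnerProductSpace ℝ X]

namespace Jfun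

variable {α : Type*} {E C : α → ℝ} {δ δ₁ δ₂ : ℝ} {u u₁ u₂ : α}

theorem strictMono_of_energy_pos (hE : 0 < E u) : StrictMono fun δ ↦ Jfun E C δ u :=
  fun _ _ hδ ↦ by simp only [Jfun]; gcongr

theorem energy_le_of_cross_le (hδ : δ₁ < δ₂) (h₁ : Jfun E C δ₁ u₁ ≤ Jfun E C δ₁ u₂)
    (h₂ : Jfun E C δ₂ u₂ ≤ Jfun E C δ₂ u₁) : E u₂ ≤ E u₁ := by
  simp only [Jfun] at h₁ h₂
  have : (δ₂ - δ₁) * E u₂ ≤ (δ₂ - δ₁) * E u₁ := by linarith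
  exact le_of_mul_le_mul_left this (sub_pos.mpr hδ)

theorem hylenicRatio_le_of_le (hδ : 0 ≤ δ) (hE : E u₂ ≤ E u₁)
    (h : Jfun E C δ u₁ ≤ Jfun E C δ u₂) : hylenicRatio E C u₁ ≤ hylenicRatio E C u₂ := by
  simp only [Jfun] at h
  linarith [mul_le_mul_of_nonneg_left hE hδ]

end Jfun

theorem abs_le_abs_of_hylenicRatio_le {α : Type*} {E C : α → ℝ} {u₁ u₂ : α} (hC₁ : C u₁ ≠ 0)
    (hC₂ : C u₂ ≠ 0) (hE₁ : 0 < E u₁) (hE : E u₂ ≤ E u₁)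
    (hΛ : hylenicRatio E C u₁ ≤ hylenicRatio E C u₂) : |C u₂| ≤ |C u₁| := by
  rw [hylenicRatio, hylenicRatio, div_le_div_iff₀ (abs_pos.mpr hC₁) (abs_pos.mpr hC₂)] at hΛ
  refine le_of_mul_le_mul_left ?_ hE₁
  calc E u₁ * |C u₂| ≤ E u₂ * |C u₁| := hΛ
    _ ≤ E u₁ * |C u₁| := by gcongr

theorem stmt_8_general (E C : X → ℝ) (δ₁ δ₂ : ℝ)
    (hδ₁ : 0 < δ₁) (hδ₁₂ : δ₁ < δ₂)
    (u₁ u₂ : X) (hC₁ : C u₁ ≠ 0) (hC₂ : C u₂ ≠ 0)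
    (hE₁ : 0 < E u₁) (hE₂ : 0 < E u₂)
    (hmin₁ : ∀ v : X, C v ≠ 0 → Jfun E C δ₁ u₁ ≤ Jfun E C δ₁ v)
    (hmin₂ : ∀ v : X, C v ≠ 0 → Jfun E C δ₂ u₂ ≤ Jfun E C δ₂ v) :
    Jfun E C δ₁ u₁ < Jfun E C δ₂ u₂ ∧
    E u₂ ≤ E u₁ ∧
    hylenicRatio E C u₁ ≤ hylenicRatio E C u₂ ∧
    |C u₂| ≤ |C u₁| := by
  have h₁ := hmin₁ u₂ hC₂
  have hE := Jfun.energy_le_of_cross_le hδ₁₂ h₁ (hmin₂ u₁ hC₁)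
  have hΛ := Jfun.hylenicRatio_le_of_le hδ₁.le hE h₁
  exact ⟨h₁.trans_lt (Jfun.strictMono_of_energy_pos hE₂ hδ₁₂), hE, hΛ,
    abs_le_abs_of_hylenicRatio_le hC₁ hC₂ hE₁ hE hΛ⟩

/-- Lemma on comparison of minimizers of `J_{δ₁}` and `J_{δ₂}` for
`0 < δ₁ < δ₂`: (a) `J_{δ₁}(u₁) < J_{δ₂}(u₂)`; (b) `E u₁ ≥ E u₂`;
(c) `Λ u₁ ≤ Λ u₂`; (d) `|C u₁| ≥ |C u₂|`. -/
theorem stmt_8 [CompleteSpace X] (E C : X → ℝ) (δ₁ δ₂ : ℝ)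
    (hδ₁ : 0 < δ₁) (hδ₁₂ : δ₁ < δ₂)
    (u₁ u₂ : X) (hC₁ : C u₁ ≠ 0) (hC₂ : C u₂ ≠ 0)
    (hE₁ : 0 < E u₁) (hE₂ : 0 < E u₂)
    (hmin₁ : ∀ v : X, C v ≠ 0 → Jfun E C δ₁ u₁ ≤ Jfun E C δ₁ v)
    (hmin₂ : ∀ v : X, C v ≠ 0 → Jfun E C δ₂ u₂ ≤ Jfun E C δ₂ v) :
    Jfun E C δ₁ u₁ < Jfun E C δ₂ u₂ ∧
    E u₂ ≤ E u₁ ∧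
    hylenicRatio E C u₁ ≤ hylenicRatio E C u₂ ∧
    |C u₂| ≤ |C u₁| :=
  stmt_8_general E C δ₁ δ₂ hδ₁ hδ₁₂ u₁ u₂ hC₁ hC₂ hE₁ hE₂ hmin₁ hmin₂
end

section
/- Let X be a real Hilbert space and G a group of linear isometric bijections of X. Let E, C : X → ℝ be continuously Fréchet differentiable, G-invariant, with E(0) = C(0) = 0, both satisfying the splitting property, and with E coercive: E(u) > 0 for every u ≠ 0, E(u_n) → ∞ whenever ‖u_n‖ → ∞, and ‖u_n‖ → 0 whenever E(u_n) → 0. Assume the hylomorphy condition inf{Λ(u) : u ∈ X, C(u) ≠ 0} < Λ₀, and assume that E′(u) = 0 and C′(u) = 0 together imply u = 0. Then for every δ₁, δ₂ ∈ (0, δ_∞) with δ₁ < δ₂, any minimizers u₁ of J_{δ₁} and u₂ of J_{δ₂} (over {u : C(u) ≠ 0}) satisfy: (a) E(u₁) > E(u₂); (b) Λ(u₁) < Λ(u₂); (c) |C(u₁)| > |C(u₂)|. -/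
/-!
Adding the two minimality inequalities `J_{δ₁}(u₁) ≤ J_{δ₁}(u₂)` and `J_{δ₂}(u₂) ≤ J_{δ₂}(u₁)`
gives `(δ₂ - δ₁)(E u₁ - E u₂) ≥ 0`. If `E u₁ = E u₂`, the same inequalities force
`Λ u₁ = Λ u₂`, so `u₂` minimizes both `J_{δ₁}` and `J_{δ₂}` on the open set `{C ≠ 0}`.
Subtracting the two Euler–Lagrange equations `Λ'(u₂) + δᵢ E'(u₂) = 0` gives `E'(u₂) = 0`,
hence `Λ'(u₂) = 0`, which together with `E u₂ > 0` gives `C'(u₂) = 0`; nondegeneracy then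
yields `u₂ = 0`, contradicting `C u₂ ≠ 0`. With `E u₂ < E u₁` in hand, the first minimality
inequality gives `Λ u₁ < Λ u₂`, and `|C| = E / Λ` gives the last claim.
-/

open Filter Topology

variable {X : Type*} [NormedAddCommGroup X] [InnerProductSpace ℝ X]

section Exchange

variable {α : Type*} {Λ E : α → ℝ} {s : Set α} {δ₁ δ₂ : ℝ} {u₁ u₂ : α}

theorem le_of_isMinOn_add_mul (h12 : δ₁ < δ₂)
    (h₁ : IsMinOn (fun v => Λ v + δ₁ * E v) s u₁) (h₂ : IsMinOn (fun v => Λ v + δ₂ * E v) s u₂)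
    (hu₁ : u₁ ∈ s) (hu₂ : u₂ ∈ s) : E u₂ ≤ E u₁ := by
  have e₁ : Λ u₁ + δ₁ * E u₁ ≤ Λ u₂ + δ₁ * E u₂ := h₁ hu₂
  have e₂ : Λ u₂ + δ₂ * E u₂ ≤ Λ u₁ + δ₂ * E u₁ := h₂ hu₁
  nlinarith

theorem IsMinOn.of_add_mul_of_eq (h₁ : IsMinOn (fun v => Λ v + δ₁ * E v) s u₁)
    (h₂ : IsMinOn (fun v => Λ v + δ₂ * E v) s u₂) (hu₁ : u₁ ∈ s) (heq : E u₁ = E u₂) :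
    IsMinOn (fun v => Λ v + δ₁ * E v) s u₂ := by
  have e₂ : Λ u₂ + δ₂ * E u₂ ≤ Λ u₁ + δ₂ * E u₁ := h₂ hu₁
  rw [heq] at e₂
  intro v hv
  have e₁ : Λ u₁ + δ₁ * E u₁ ≤ Λ v + δ₁ * E v := h₁ hv
  rw [heq] at e₁
  show Λ u₂ + δ₁ * E u₂ ≤ Λ v + δ₁ * E v
  linarith

theorem lt_of_isMinOn_add_mul (hδ₁ : 0 < δ₁) (h₁ : IsMinOn (fun v => Λ v + δ₁ * E v) s u₁)
    (hu₂ : u₂ ∈ s) (hE : E u₂ < E u₁) : Λ u₁ < Λ u₂ := by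
  have e₁ : Λ u₁ + δ₁ * E u₁ ≤ Λ u₂ + δ₁ * E u₂ := h₁ hu₂
  nlinarith

end Exchange

theorem lt_of_div_lt_div_of_lt {a₁ a₂ c₁ c₂ : ℝ} (ha₁ : 0 < a₁) (ha : a₂ < a₁)
    (hc₁ : 0 < c₁) (hc₂ : 0 < c₂) (h : a₁ / c₁ < a₂ / c₂) : c₂ < c₁ := by
  rw [div_lt_div_iff₀ hc₁ hc₂] at h
  nlinarith

theorem HasFDerivAt.div_abs {V : Type*} [NormedAddCommGroup V] [NormedSpace ℝ V]
    {f g : V → ℝ} {f' g' : V →L[ℝ] ℝ} {u : V}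
    (hf : HasFDerivAt f f' u) (hg : HasFDerivAt g g' u) (hgu : g u ≠ 0) :
    HasFDerivAt (fun v => f v / |g v|) (|g u|⁻¹ • f' - (f u / (g u * |g u|)) • g') u := by
  have hinv := (hasDerivAt_inv (abs_ne_zero.mpr hgu)).comp_hasFDerivAt u (hg.abs hgu)
  simp only [div_eq_mul_inv]
  refine (hf.mul hinv).congr_fderiv ?_
  have hsign : (SignType.sign (g u) : ℝ) / |g u| ^ 2 = (g u * |g u|)⁻¹ := by
    rcases hgu.lt_or_gt with h | h
    · simp [_root_.abs_of_neg h, h]; field_simp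
    · simp [_root_.abs_of_pos h, h]; field_simp
  ext x
  simp only [Function.comp_apply, add_apply, sub_apply, smul_apply, smul_eq_mul, ← hsign]
  ring

section Jfun

variable {E C : X → ℝ} {E' C' : X →L[ℝ] ℝ} {δ : ℝ} {u : X}

theorem hasFDerivAt_Jfun (hE : HasFDerivAt E E' u) (hC : HasFDerivAt C C' u) (hCu : C u ≠ 0) :
    HasFDerivAt (Jfun E C δ) (|C u|⁻¹ • E' - (E u / (C u * |C u|)) • C' + δ • E') u :=
  (hE.div_abs hC hCu).add (hE.const_mul δ)

theorem IsMinOn.euler_lagrange_Jfun (hmin : IsMinOn (Jfun E C δ) {v | C v ≠ 0} u)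
    (hE : HasFDerivAt E E' u) (hC : HasFDerivAt C C' u) (hCu : C u ≠ 0) :
    |C u|⁻¹ • E' - (E u / (C u * |C u|)) • C' + δ • E' = 0 :=
  (hmin.isLocalMin (hC.continuousAt.preimage_mem_nhds (isOpen_ne.mem_nhds hCu))).hasFDerivAt_eq_zero
    (hasFDerivAt_Jfun hE hC hCu)

theorem fderiv_eq_zero_of_isMinOn_Jfun {δ₁ δ₂ : ℝ} (h12 : δ₁ ≠ δ₂)
    (h₁ : IsMinOn (Jfun E C δ₁) {v | C v ≠ 0} u) (h₂ : IsMinOn (Jfun E C δ₂) {v | C v ≠ 0} u)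
    (hE : HasFDerivAt E E' u) (hC : HasFDerivAt C C' u) (hCu : C u ≠ 0) (hEu : E u ≠ 0) :
    E' = 0 ∧ C' = 0 := by
  have el₁ := h₁.euler_lagrange_Jfun hE hC hCu
  have el₂ := h₂.euler_lagrange_Jfun hE hC hCu
  have hE' : E' = 0 := by
    have : (δ₁ - δ₂) • E' = 0 := by linear_combination (norm := module) el₁ - el₂
    exact (smul_eq_zero.mp this).resolve_left (sub_ne_zero.mpr h12)
  refine ⟨hE', ?_⟩
  simp only [hE', smul_zero, add_zero, zero_sub, neg_eq_zero] at el₁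
  exact (smul_eq_zero.mp el₁).resolve_left (by positivity)

end Jfun

theorem stmt_9_general (G : Subgroup (X ≃ₗᵢ[ℝ] X)) (E C : X → ℝ)
    (hEd : ContDiff ℝ 1 E) (hCd : ContDiff ℝ 1 C)
    (hC0 : C 0 = 0)
    (hEpos : ∀ u : X, u ≠ 0 → 0 < E u)
    (hnd : ∀ u : X, fderiv ℝ E u = 0 → fderiv ℝ C u = 0 → u = 0)
    (δ₁ δ₂ : ℝ) (hδ₁ : MemDeltaInterval G E C δ₁)
    (h12 : δ₁ < δ₂)
    (u₁ u₂ : X) (hC₁ : C u₁ ≠ 0) (hC₂ : C u₂ ≠ 0)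
    (hmin₁ : ∀ v : X, C v ≠ 0 → Jfun E C δ₁ u₁ ≤ Jfun E C δ₁ v)
    (hmin₂ : ∀ v : X, C v ≠ 0 → Jfun E C δ₂ u₂ ≤ Jfun E C δ₂ v) :
    E u₂ < E u₁ ∧
    hylenicRatio E C u₁ < hylenicRatio E C u₂ ∧
    |C u₂| < |C u₁| := by
  have hu₂ : u₂ ≠ 0 := by rintro rfl; exact hC₂ hC0
  have hmin₁' : IsMinOn (Jfun E C δ₁) {v | C v ≠ 0} u₁ := isMinOn_iff.mpr hmin₁
  have hmin₂' : IsMinOn (Jfun E C δ₂) {v | C v ≠ 0} u₂ := isMinOn_iff.mpr hmin₂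
  have hE_lt : E u₂ < E u₁ := by
    refine (le_of_isMinOn_add_mul h12 hmin₁' hmin₂' hC₁ hC₂).lt_of_ne fun heq => hu₂ ?_
    have hmin₁₂ : IsMinOn (Jfun E C δ₁) {v | C v ≠ 0} u₂ :=
      hmin₁'.of_add_mul_of_eq hmin₂' hC₁ heq.symm
    obtain ⟨hE', hC'⟩ := fderiv_eq_zero_of_isMinOn_Jfun h12.ne hmin₁₂ hmin₂'
      (hEd.differentiable one_ne_zero u₂).hasFDerivAt
      (hCd.differentiable one_ne_zero u₂).hasFDerivAt hC₂ (hEpos u₂ hu₂).ne'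
    exact hnd u₂ hE' hC'
  have hΛ_lt := lt_of_isMinOn_add_mul hδ₁.1 hmin₁' hC₂ hE_lt
  refine ⟨hE_lt, hΛ_lt, ?_⟩
  have hE₁ : 0 < E u₁ := hEpos u₁ (by rintro rfl; exact hC₁ hC0)
  exact lt_of_div_lt_div_of_lt hE₁ hE_lt (abs_pos.mpr hC₁) (abs_pos.mpr hC₂) hΛ_lt

/-- Comparison of minimizers of `J_{δ₁}` and `J_{δ₂}` (Lemma 17 / `BB`):
under (EC-0)–(EC-3), hylomorphy and the nondegeneracy condition
`E'(u) = C'(u) = 0 ⇒ u = 0`, for `δ₁ < δ₂` in `(0, δ_∞)` any minimizers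
satisfy strict inequalities `E u₁ > E u₂`, `Λ u₁ < Λ u₂`, `|C u₁| > |C u₂|`. -/
theorem stmt_9 [CompleteSpace X] (G : Subgroup (X ≃ₗᵢ[ℝ] X)) (E C : X → ℝ)
    (hEd : ContDiff ℝ 1 E) (hCd : ContDiff ℝ 1 C)
    (hEG : ∀ g : G, ∀ u : X, E ((g : X ≃ₗᵢ[ℝ] X) u) = E u)
    (hCG : ∀ g : G, ∀ u : X, C ((g : X ≃ₗᵢ[ℝ] X) u) = C u)
    (hE0 : E 0 = 0) (hC0 : C 0 = 0)
    (hEs : SplittingProperty E) (hCs : SplittingProperty C)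
    (hEpos : ∀ u : X, u ≠ 0 → 0 < E u)
    (hEcoer : ∀ u : ℕ → X, Tendsto (fun n => ‖u n‖) atTop atTop →
      Tendsto (fun n => E (u n)) atTop atTop)
    (hEzero : ∀ u : ℕ → X, Tendsto (fun n => E (u n)) atTop (𝓝 0) →
      Tendsto (fun n => ‖u n‖) atTop (𝓝 0))
    (hhylo : HylomorphyCondition G E C)
    (hnd : ∀ u : X, fderiv ℝ E u = 0 → fderiv ℝ C u = 0 → u = 0)
    (δ₁ δ₂ : ℝ) (hδ₁ : MemDeltaInterval G E C δ₁)
    (hδ₂ : MemDeltaInterval G E C δ₂) (h12 : δ₁ < δ₂)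
    (u₁ u₂ : X) (hC₁ : C u₁ ≠ 0) (hC₂ : C u₂ ≠ 0)
    (hmin₁ : ∀ v : X, C v ≠ 0 → Jfun E C δ₁ u₁ ≤ Jfun E C δ₁ v)
    (hmin₂ : ∀ v : X, C v ≠ 0 → Jfun E C δ₂ u₂ ≤ Jfun E C δ₂ v) :
    E u₂ < E u₁ ∧
    hylenicRatio E C u₁ < hylenicRatio E C u₂ ∧
    |C u₂| < |C u₁| :=
  stmt_9_general G E C hEd hCd hC0 hEpos hnd δ₁ δ₂ hδ₁ h12 u₁ u₂ hC₁ hC₂ hmin₁ hmin₂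
end

section
/- Let (X, d) be a metric space and G a group of bijections of X acting by isometries (d(gu, gv) = d(u, v) for all g ∈ G, u, v ∈ X). Let V : X → ℝ be continuous, G-invariant, nonnegative, with infimum 0 attained, such that every minimizing sequence of V is G-compact, and let Γ = V⁻¹(0) be the (nonempty) set of minimizers of V. Then: (i) Γ is G-compact (every sequence in Γ is G-compact); and (ii) for every sequence (u_n) in X, V(u_n) → 0 if and only if d(u_n, Γ) → 0. -/
/-!
If `V (u n) → 0`, every subsequence has a further subsequence whose `G`-translates converge, and
by continuity and invariance the limit lies in `Γ`; pulling it back by the isometry bounds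
`d(u n, Γ)` along that subsequence. Conversely, if `d(u n, Γ) → 0`, pick `γ n ∈ Γ` with
`d(u n, γ n) → 0`; the sequence `(γ n)` is minimizing, so suitable translates `g k (γ n_k)`
converge to some `L ∈ Γ`, and since the `g k` are isometries so do the `g k (u n_k)`, whence
`V (u n_k) = V (g k (u n_k)) → V L = 0`. In both directions the subsequence principle upgrades
this to convergence of the whole sequence.
-/

open Filter Topology Metric

def IsGCompactSeq {X : Type*} [TopologicalSpace X] (G : Subgroup (Equiv.Perm X))
    (u : ℕ → X) : Prop :=
  ∃ φ : ℕ → ℕ, StrictMono φ ∧ ∃ g : ℕ → G, ∃ L : X,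
    Tendsto (fun k => (g k : Equiv.Perm X) (u (φ k))) atTop (𝓝 L)

lemma Metric.infDist_le_dist_of_isometry {X : Type*} [PseudoMetricSpace X] {e : X ≃ X}
    (he : Isometry e) {s : Set X} {y : X} (hy : e.symm y ∈ s) (x : X) :
    infDist x s ≤ dist (e x) y :=
  calc infDist x s ≤ dist x (e.symm y) := infDist_le_dist_of_mem hy
    _ = dist (e x) y := by rw [← he.dist_eq, e.apply_symm_apply]

lemma Metric.exists_mem_tendsto_dist_of_tendsto_infDist {X : Type*} [PseudoMetricSpace X]
    {s : Set X} (hs : s.Nonempty) {u : ℕ → X}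
    (hu : Tendsto (fun n => infDist (u n) s) atTop (𝓝 0)) :
    ∃ γ : ℕ → X, (∀ n, γ n ∈ s) ∧ Tendsto (fun n => dist (u n) (γ n)) atTop (𝓝 0) := by
  have hclose : ∀ n : ℕ, ∃ γ ∈ s, dist (u n) γ < infDist (u n) s + 1 / (n + 1) := fun n =>
    (infDist_lt_iff hs).mp (lt_add_of_pos_right _ Nat.one_div_pos_of_nat)
  choose γ hγs hγ using hclose
  refine ⟨γ, hγs, squeeze_zero (fun _ => dist_nonneg) (fun n => (hγ n).le) ?_⟩
  simpa using hu.add tendsto_one_div_add_atTop_nhds_zero_nat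

section

variable {X : Type*} {G : Subgroup (Equiv.Perm X)} {V : X → ℝ}

lemma apply_symm_eq_of_invariant (hVG : ∀ g : G, ∀ u : X, V ((g : Equiv.Perm X) u) = V u)
    (g : G) (u : X) : V ((g : Equiv.Perm X).symm u) = V u := by
  rw [← hVG g, Equiv.apply_symm_apply]

lemma exists_translate_tendsto_zero_of_minimizing [TopologicalSpace X] (hVc : Continuous V)
    (hVG : ∀ g : G, ∀ u : X, V ((g : Equiv.Perm X) u) = V u)
    (hmin : ∀ u : ℕ → X, Tendsto (V ∘ u) atTop (𝓝 0) → IsGCompactSeq G u)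
    {u : ℕ → X} (hu : Tendsto (V ∘ u) atTop (𝓝 0)) :
    ∃ φ : ℕ → ℕ, StrictMono φ ∧ ∃ g : ℕ → G, ∃ L : X, V L = 0 ∧
      Tendsto (fun k => (g k : Equiv.Perm X) (u (φ k))) atTop (𝓝 L) := by
  obtain ⟨φ, hφ, g, L, hL⟩ := hmin u hu
  have hVtranslate : Tendsto (fun k => V ((g k : Equiv.Perm X) (u (φ k)))) atTop (𝓝 0) := by
    simpa only [hVG, Function.comp_def] using hu.comp hφ.tendsto_atTop
  exact ⟨φ, hφ, g, L, tendsto_nhds_unique ((hVc.tendsto L).comp hL) hVtranslate, hL⟩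

variable [MetricSpace X]

lemma tendsto_infDist_zero_of_minimizing (hiso : ∀ g : G, Isometry (g : Equiv.Perm X))
    (hVc : Continuous V) (hVG : ∀ g : G, ∀ u : X, V ((g : Equiv.Perm X) u) = V u)
    (hmin : ∀ u : ℕ → X, Tendsto (V ∘ u) atTop (𝓝 0) → IsGCompactSeq G u)
    {u : ℕ → X} (hu : Tendsto (V ∘ u) atTop (𝓝 0)) :
    Tendsto (fun n => infDist (u n) (V ⁻¹' {0})) atTop (𝓝 0) := by
  refine tendsto_of_subseq_tendsto fun ns hns => ?_
  obtain ⟨φ, -, g, L, hVL, hL⟩ :=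
    exists_translate_tendsto_zero_of_minimizing hVc hVG hmin (hu.comp hns)
  refine ⟨φ, squeeze_zero (fun _ => infDist_nonneg) (fun k => ?_)
    (tendsto_iff_dist_tendsto_zero.mp hL)⟩
  refine infDist_le_dist_of_isometry (hiso (g k)) ?_ _
  exact (apply_symm_eq_of_invariant hVG (g k) L).trans hVL

lemma tendsto_zero_of_tendsto_infDist (hiso : ∀ g : G, Isometry (g : Equiv.Perm X))
    (hVc : Continuous V) (hVG : ∀ g : G, ∀ u : X, V ((g : Equiv.Perm X) u) = V u)
    (hne : ∃ u : X, V u = 0)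
    (hmin : ∀ u : ℕ → X, Tendsto (V ∘ u) atTop (𝓝 0) → IsGCompactSeq G u)
    {u : ℕ → X} (hu : Tendsto (fun n => infDist (u n) (V ⁻¹' {0})) atTop (𝓝 0)) :
    Tendsto (V ∘ u) atTop (𝓝 0) := by
  obtain ⟨γ, hγ, hdist⟩ := exists_mem_tendsto_dist_of_tendsto_infDist hne hu
  refine tendsto_of_subseq_tendsto fun ns hns => ?_
  have hγmin : Tendsto (V ∘ γ ∘ ns) atTop (𝓝 0) := by
    simp only [Function.comp_def, show ∀ n, V (γ n) = 0 from hγ, tendsto_const_nhds]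
  obtain ⟨φ, hφ, g, L, hVL, hL⟩ :=
    exists_translate_tendsto_zero_of_minimizing hVc hVG hmin hγmin
  have huL : Tendsto (fun k => (g k : Equiv.Perm X) (u (ns (φ k)))) atTop (𝓝 L) := by
    refine tendsto_of_tendsto_of_dist hL ?_
    simpa only [(hiso _).dist_eq, dist_comm, Function.comp_def] using
      hdist.comp (hns.comp hφ.tendsto_atTop)
  refine ⟨φ, ?_⟩
  simpa only [hVG, hVL, Function.comp_def] using (hVc.tendsto L).comp huL

end

theorem stmt_11_general {X : Type*} [MetricSpace X] (G : Subgroup (Equiv.Perm X))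
    (hiso : ∀ g : G, ∀ u v : X,
      dist ((g : Equiv.Perm X) u) ((g : Equiv.Perm X) v) = dist u v)
    (V : X → ℝ) (hVc : Continuous V)
    (hVG : ∀ g : G, ∀ u : X, V ((g : Equiv.Perm X) u) = V u)
    (hne : ∃ u : X, V u = 0)
    (hmin : ∀ u : ℕ → X, Tendsto (fun n => V (u n)) atTop (𝓝 0) →
      ∃ φ : ℕ → ℕ, StrictMono φ ∧ ∃ g : ℕ → G, ∃ L : X,
        Tendsto (fun k => ((g k : Equiv.Perm X)) (u (φ k))) atTop (𝓝 L)) :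
    (∀ u : ℕ → X, (∀ n, V (u n) = 0) →
      ∃ φ : ℕ → ℕ, StrictMono φ ∧ ∃ g : ℕ → G, ∃ L : X,
        Tendsto (fun k => ((g k : Equiv.Perm X)) (u (φ k))) atTop (𝓝 L)) ∧
    (∀ u : ℕ → X, Tendsto (fun n => V (u n)) atTop (𝓝 0) ↔
      Tendsto (fun n => Metric.infDist (u n) (V ⁻¹' {0})) atTop (𝓝 0)) := by
  have hisoG : ∀ g : G, Isometry (g : Equiv.Perm X) := fun g => Isometry.of_dist_eq (hiso g)
  refine ⟨fun u hu => hmin u (by simp only [hu, tendsto_const_nhds]), fun u => ⟨?_, ?_⟩⟩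
  · exact tendsto_infDist_zero_of_minimizing hisoG hVc hVG hmin
  · exact tendsto_zero_of_tendsto_infDist hisoG hVc hVG hne hmin

/-- Lemma LC: let `G` be a group of bijections of a metric space `X` acting by
isometries, and `V : X → ℝ` continuous, `G`-invariant, nonnegative, attaining
its infimum `0`, such that every minimizing sequence of `V` is `G`-compact.
Let `Γ = V⁻¹(0)`. Then (i) every sequence in `Γ` is `G`-compact, and
(ii) `V (u n) → 0 ↔ dist (u n, Γ) → 0` for every sequence `(u n)`. -/
theorem stmt_11 {X : Type*} [MetricSpace X] (G : Subgroup (Equiv.Perm X))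
    (hiso : ∀ g : G, ∀ u v : X,
      dist ((g : Equiv.Perm X) u) ((g : Equiv.Perm X) v) = dist u v)
    (V : X → ℝ) (hVc : Continuous V)
    (hVG : ∀ g : G, ∀ u : X, V ((g : Equiv.Perm X) u) = V u)
    (hV0 : ∀ u : X, 0 ≤ V u)
    (hne : ∃ u : X, V u = 0)
    (hmin : ∀ u : ℕ → X, Tendsto (fun n => V (u n)) atTop (𝓝 0) →
      ∃ φ : ℕ → ℕ, StrictMono φ ∧ ∃ g : ℕ → G, ∃ L : X,
        Tendsto (fun k => ((g k : Equiv.Perm X)) (u (φ k))) atTop (𝓝 L)) :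
    (∀ u : ℕ → X, (∀ n, V (u n) = 0) →
      ∃ φ : ℕ → ℕ, StrictMono φ ∧ ∃ g : ℕ → G, ∃ L : X,
        Tendsto (fun k => ((g k : Equiv.Perm X)) (u (φ k))) atTop (𝓝 L)) ∧
    (∀ u : ℕ → X, Tendsto (fun n => V (u n)) atTop (𝓝 0) ↔
      Tendsto (fun n => Metric.infDist (u n) (V ⁻¹' {0})) atTop (𝓝 0)) :=
  stmt_11_general G hiso V hVc hVG hne hmin
end
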